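/- Let G be a connected graph on n≥3 vertices that contains a cycle. Then for every η>0 there exists a positive definite matrix A with zeros at the non-edges of G such that the hard-thresholded version of A at level η (setting to zero all off-diagonal entries of absolute value at most η) is not positive definite. -/

import Mathlib

/-!
Pick a cycle and delete one of its edges `s(u, v)`, leaving a walk `q` from `u` to `v` of length
`ℓ ≥ 2`. Let `B` be the Laplacian of `q` plus the identity off the cycle, and
`A = 2η (B + ℓ⁻¹ (E_uv + E_vu))`. The path entries of `A` equal `-2η` and survive thresholding,
while the closing entries `2η / ℓ ≤ η` are removed, so thresholding `A` gives `2η B`, which kills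
the indicator vector of the cycle. On the other hand, Cauchy–Schwarz along `q` gives
`xᵀ L_q x ≥ (x u - x v)² / ℓ`, so `xᵀ A x ≥ 2η ((x u² + x v²) / ℓ + ∑_{i off the cycle} x i²)`.
If `xᵀ A x ≤ 0`, then `x` vanishes at `u` and off the cycle, and `xᵀ L_q x = 0` makes it constant
along `q`, so `x = 0`.
-/

open Matrix

noncomputable def Matrix.hardThreshold {V : Type*} [DecidableEq V] (η : ℝ)
    (A : Matrix V V ℝ) : Matrix V V ℝ :=
  of fun i j => if i = j ∨ η < |A i j| then A i j else 0

namespace SimpleGraph.Walk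

variable {V : Type*} {G : SimpleGraph V}

def energy {u v : V} (q : G.Walk u v) (x : V → ℝ) : ℝ :=
  (q.darts.map fun d => (x d.fst - x d.snd) ^ 2).sum

@[simp]
theorem energy_nil {u : V} (x : V → ℝ) : (nil : G.Walk u u).energy x = 0 := rfl

@[simp]
theorem energy_cons {u v w : V} (h : G.Adj u v) (q : G.Walk v w) (x : V → ℝ) :
    (cons h q).energy x = (x u - x v) ^ 2 + q.energy x := rfl

theorem energy_nonneg {u v : V} (q : G.Walk u v) (x : V → ℝ) : 0 ≤ q.energy x :=
  List.sum_nonneg (by simp [sq_nonneg])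

theorem sq_sub_le_length_mul_energy {u v : V} (q : G.Walk u v) (x : V → ℝ) :
    (x u - x v) ^ 2 ≤ q.length * q.energy x := by
  induction q with
  | nil => simp
  | @cons a b w h q ih =>
    have hS := q.energy_nonneg x
    rw [energy_cons, length_cons, Nat.cast_succ]
    rcases (Nat.cast_nonneg q.length : (0 : ℝ) ≤ q.length).eq_or_lt with hn | hn
    · rw [← hn] at ih ⊢
      nlinarith [sq_nonneg (x a - x b)]
    · nlinarith [sq_nonneg (q.length * (x a - x b) - (x b - x w)), mul_pos hn hn]

theorem apply_eq_of_energy_eq_zero {u v : V} (q : G.Walk u v) {x : V → ℝ}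
    (hx : q.energy x = 0) {y : V} (hy : y ∈ q.support) : x y = x u := by
  induction q with
  | nil => simp_all
  | @cons a b w h q ih =>
    rw [energy_cons] at hx
    have hq : q.energy x = 0 := by nlinarith [sq_nonneg (x a - x b), q.energy_nonneg x]
    have hab : x a = x b := by nlinarith [sq_nonneg (x a - x b), q.energy_nonneg x]
    rw [support_cons, List.mem_cons] at hy
    rcases hy with rfl | hy
    · rfl
    · exact (ih hq hy).trans hab.symm

theorem two_le_length_of_notMem_edges {u v : V} (huv : u ≠ v) (q : G.Walk u v)
    (hq : s(u, v) ∉ q.edges) : 2 ≤ q.length := by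
  rcases q with _ | ⟨h, _ | _⟩
  · exact absurd rfl huv
  · simp at hq
  · simp

variable [DecidableEq V]

/-- The Laplacian of the multigraph traced out by the walk. -/
def lapMatrix {u v : V} : G.Walk u v → Matrix V V ℝ
  | nil => 0
  | @cons _ _ a b _ _ q =>
      vecMulVec (Pi.single a 1 - Pi.single b 1) (Pi.single a 1 - Pi.single b 1) + q.lapMatrix

def baseMatrix {u v : V} (q : G.Walk u v) : Matrix V V ℝ :=
  q.lapMatrix + diagonal fun i => if i ∈ q.support then 0 else 1

noncomputable def closingMatrix {u v : V} (q : G.Walk u v) : Matrix V V ℝ :=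
  q.baseMatrix + (q.length : ℝ)⁻¹ • (single u v 1 + single v u 1)

theorem isHermitian_lapMatrix {u v : V} (q : G.Walk u v) : q.lapMatrix.IsHermitian := by
  induction q with
  | nil => exact isHermitian_zero
  | cons _ _ ih => exact IsHermitian.add (by simp [IsHermitian]) ih

theorem isHermitian_closingMatrix {u v : V} (q : G.Walk u v) : q.closingMatrix.IsHermitian :=
  (q.isHermitian_lapMatrix.add (isHermitian_diagonal _)).add
    (IsHermitian.smul (by simp [IsHermitian, add_comm]) (IsSelfAdjoint.all _))

theorem lapMatrix_apply_of_ne {u v : V} (q : G.Walk u v) {a b : V} (hab : a ≠ b) :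
    q.lapMatrix a b = -(q.edges.count s(a, b) : ℝ) := by
  induction q with
  | nil => simp [lapMatrix]
  | @cons c d _ h _ ih =>
    have hcd := h.ne
    rw [lapMatrix, Matrix.add_apply, ih, edges_cons, List.count_cons]
    simp only [vecMulVec_apply, Pi.sub_apply, Pi.single_apply, beq_iff_eq, Sym2.eq_iff]
    split_ifs <;> simp_all <;> grind

theorem baseMatrix_apply_of_ne {u v : V} (q : G.Walk u v) {a b : V} (hab : a ≠ b) :
    q.baseMatrix a b = -(q.edges.count s(a, b) : ℝ) := by
  simp [baseMatrix, q.lapMatrix_apply_of_ne hab, hab]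

theorem closingMatrix_apply_of_ne {u v : V} (q : G.Walk u v) {a b : V} (hab : a ≠ b) :
    q.closingMatrix a b =
      -(q.edges.count s(a, b) : ℝ) + (q.length : ℝ)⁻¹ * if s(a, b) = s(u, v) then 1 else 0 := by
  rw [closingMatrix, Matrix.add_apply, q.baseMatrix_apply_of_ne hab]
  simp only [Matrix.smul_apply, Matrix.add_apply, single_apply, Sym2.eq_iff, smul_eq_mul]
  split_ifs <;> simp_all
  grind

theorem closingMatrix_apply_eq_zero {u v : V} (huv : G.Adj u v) (q : G.Walk u v) {a b : V}
    (hab : a ≠ b) (hnadj : ¬ G.Adj a b) : q.closingMatrix a b = 0 := by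
  have hq : s(a, b) ∉ q.edges := fun he => hnadj (q.adj_of_mem_edges he)
  have huv : s(a, b) ≠ s(u, v) := fun he =>
    hnadj (by rwa [← SimpleGraph.mem_edgeSet, he, SimpleGraph.mem_edgeSet])
  simp [q.closingMatrix_apply_of_ne hab, List.count_eq_zero_of_not_mem hq, huv]

theorem hardThreshold_smul_closingMatrix {u v : V} (huv : u ≠ v) (q : G.Walk u v)
    (hq : s(u, v) ∉ q.edges) {η : ℝ} (hη : 0 < η) :
    hardThreshold η ((2 * η) • q.closingMatrix) = (2 * η) • q.baseMatrix := by
  have hlen : (2 : ℝ) ≤ q.length := by exact_mod_cast q.two_le_length_of_notMem_edges huv hq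
  ext a b
  simp only [hardThreshold, of_apply, Matrix.smul_apply, smul_eq_mul]
  by_cases hab : a = b
  · subst hab
    have huva : ¬ (u = a ∧ v = a) := fun h => huv (h.1.trans h.2.symm)
    have hvua : ¬ (v = a ∧ u = a) := fun h => huva h.symm
    rw [if_pos (Or.inl rfl)]
    simp [closingMatrix, huva, hvua]
  simp only [hab, false_or, closingMatrix_apply_of_ne q hab, baseMatrix_apply_of_ne q hab]
  by_cases he : s(a, b) = s(u, v)
  · have hc : 2 * (q.length : ℝ)⁻¹ ≤ 1 := by
      rwa [← div_eq_mul_inv, div_le_one (by positivity)]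
    have hsmall : ¬ η < |2 * η * (q.length : ℝ)⁻¹| := by
      rw [abs_of_pos (by positivity), not_lt]
      nlinarith
    simp only [he, ↓reduceIte, List.count_eq_zero_of_not_mem hq, Nat.cast_zero, neg_zero,
      zero_add, mul_one, mul_zero]
    exact if_neg hsmall
  · rcases Nat.eq_zero_or_pos (q.edges.count s(a, b)) with hk | hk
    · simp [he, hk]
    · have hkR : (1 : ℝ) ≤ q.edges.count s(a, b) := by exact_mod_cast hk
      rw [if_pos] <;> simp only [he, if_false, mul_zero, add_zero]
      rw [abs_of_neg (by nlinarith)]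
      nlinarith

variable [Fintype V]

theorem dotProduct_lapMatrix_mulVec {u v : V} (q : G.Walk u v) (x : V → ℝ) :
    x ⬝ᵥ q.lapMatrix *ᵥ x = q.energy x := by
  induction q with
  | nil => simp [lapMatrix]
  | cons _ _ ih =>
    rw [lapMatrix, add_mulVec, dotProduct_add, ih, vecMulVec_mulVec, energy_cons]
    simp [dotProduct_sub, sub_dotProduct]
    ring

theorem dotProduct_baseMatrix_mulVec {u v : V} (q : G.Walk u v) (x : V → ℝ) :
    x ⬝ᵥ q.baseMatrix *ᵥ x = q.energy x + ∑ i, if i ∈ q.support then 0 else x i ^ 2 := by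
  rw [baseMatrix, add_mulVec, dotProduct_add, dotProduct_lapMatrix_mulVec]
  simp only [dotProduct, mulVec_diagonal]
  congr 1
  exact Finset.sum_congr rfl fun i _ => by split_ifs <;> ring

theorem dotProduct_closingMatrix_mulVec {u v : V} (q : G.Walk u v) (x : V → ℝ) :
    x ⬝ᵥ q.closingMatrix *ᵥ x =
      x ⬝ᵥ q.baseMatrix *ᵥ x + (q.length : ℝ)⁻¹ * (2 * (x u * x v)) := by
  simp [closingMatrix, add_mulVec, single_mulVec, dotProduct_add, ← Pi.single.eq_1]
  ring

theorem not_posDef_baseMatrix {u v : V} (q : G.Walk u v) : ¬ q.baseMatrix.PosDef := by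
  intro hpd
  set x : V → ℝ := fun i => if i ∈ q.support then 1 else 0
  have hx : x ≠ 0 := fun h => by simpa [x] using congrFun h u
  have henergy : q.energy x = 0 := List.sum_eq_zero fun t ht => by
    obtain ⟨d, hd, rfl⟩ := List.mem_map.mp ht
    simp [x, q.dart_fst_mem_support_of_mem_darts hd, q.dart_snd_mem_support_of_mem_darts hd]
  have hoff : (∑ i, if i ∈ q.support then 0 else x i ^ 2) = 0 :=
    Finset.sum_eq_zero fun i _ => by split_ifs <;> simp_all [x]
  have := hpd.dotProduct_mulVec_pos hx
  rw [star_trivial, dotProduct_baseMatrix_mulVec, henergy, hoff] at this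
  simp at this

theorem posDef_closingMatrix {u v : V} (q : G.Walk u v) (hq : 0 < q.length) :
    q.closingMatrix.PosDef := by
  refine posDef_iff_dotProduct_mulVec.mpr ⟨q.isHermitian_closingMatrix, fun x hx => ?_⟩
  rw [star_trivial, dotProduct_closingMatrix_mulVec, dotProduct_baseMatrix_mulVec]
  set c : ℝ := (q.length : ℝ)⁻¹
  set D := ∑ i, if i ∈ q.support then 0 else x i ^ 2
  have hc : 0 < c := inv_pos.mpr (by exact_mod_cast hq)
  have hD : 0 ≤ D := Finset.sum_nonneg fun i _ => by split_ifs <;> positivity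
  have hE := q.energy_nonneg x
  have hCS : c * (x u - x v) ^ 2 ≤ q.energy x := by
    calc c * (x u - x v) ^ 2 ≤ c * (q.length * q.energy x) :=
          mul_le_mul_of_nonneg_left (q.sq_sub_le_length_mul_energy x) hc.le
      _ = q.energy x := by rw [← mul_assoc, inv_mul_cancel₀ (by positivity), one_mul]
  by_contra! hle
  have hsq : x u ^ 2 + x v ^ 2 ≤ 0 := nonpos_of_mul_nonpos_right (by nlinarith) hc
  have hu : x u = 0 := by nlinarith [sq_nonneg (x u), sq_nonneg (x v)]
  have henergy : q.energy x = 0 := by rw [hu] at hle; linarith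
  have hDzero : D = 0 := by rw [hu] at hle; linarith
  refine hx (funext fun y => ?_)
  by_cases hy : y ∈ q.support
  · exact (q.apply_eq_of_energy_eq_zero henergy hy).trans hu
  · have := (Finset.sum_eq_zero_iff_of_nonneg fun i _ => by split_ifs <;> positivity).mp hDzero y
      (Finset.mem_univ y)
    simpa [hy] using this

end SimpleGraph.Walk

open SimpleGraph Walk in
theorem SimpleGraph.exists_posDef_not_posDef_hardThreshold {V : Type*} [Fintype V]
    [DecidableEq V] {G : SimpleGraph V} (hG : ¬ G.IsAcyclic) {η : ℝ} (hη : 0 < η) :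
    ∃ A : Matrix V V ℝ, A.PosDef ∧ (∀ i j, i ≠ j → ¬ G.Adj i j → A i j = 0) ∧
      ¬ (hardThreshold η A).PosDef := by
  obtain ⟨w, c, hc⟩ : ∃ w, ∃ c : G.Walk w w, c.IsCycle := by simpa [IsAcyclic] using hG
  cases c with
  | nil => exact absurd hc not_isCycle_nil
  | @cons _ v _ h q =>
    have hq : s(v, w) ∉ q.edges := by
      rw [Sym2.eq_swap]
      exact ((cons_isCycle_iff q h).mp hc).2
    have hlen := q.two_le_length_of_notMem_edges h.ne.symm hq
    refine ⟨(2 * η) • q.closingMatrix, (q.posDef_closingMatrix (by omega)).smul (by positivity),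
      fun i j hij hnadj => by simp [q.closingMatrix_apply_eq_zero h.symm hij hnadj], ?_⟩
    rw [hardThreshold_smul_closingMatrix h.ne.symm q hq hη]
    intro hpd
    have := hpd.smul (inv_pos.mpr (by positivity : 0 < 2 * η))
    rw [smul_smul, inv_mul_cancel₀ (by positivity), one_smul] at this
    exact q.not_posDef_baseMatrix this

theorem stmt_15 {n : ℕ} (G : SimpleGraph (Fin n))
    (hcyc : ¬ G.IsAcyclic) (η : ℝ) (hη : 0 < η) :
    ∃ A : Matrix (Fin n) (Fin n) ℝ, A.PosDef ∧
      (∀ i j : Fin n, i ≠ j → ¬ G.Adj i j → A i j = 0) ∧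
      ¬ (Matrix.of fun i j : Fin n =>
          if i = j ∨ η < |A i j| then A i j else 0).PosDef :=
  G.exists_posDef_not_posDef_hardThreshold hcyc hη
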